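/- Let q be an odd prime power and χ a primitive Dirichlet character of 𝔽_q[T] modulo a monic h with deg h ≥ 1. Define G(χ) := Σ_{a mod h} χ(a)·e_q(a/h) and τ(χ) := Σ_{c ∈ 𝔽_q^×} χ(c)·exp(2πi·Tr_{𝔽_q/𝔽_p}(c)/p) (χ evaluated at the constant polynomials c). If χ is odd, then G(χ) = τ(χ) · Σ_{f ∈ M_{q,deg h−1}} χ(f); if χ is even, then G(χ) = −q · Σ_{f ∈ M_{q,deg h−1}} χ(f). -/

import Mathlib

open scoped Classical
open Polynomial

namespace CubicLF

lemma finite_degreeLT (Fq : Type) [Field Fq] [Fintype Fq] (n : ℕ) :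
    {f : Polynomial Fq | f.degree < (n : ℕ)}.Finite := by
  haveI : Finite (Polynomial.degreeLT Fq n) :=
    Finite.of_equiv _ (Polynomial.degreeLTEquiv Fq n).toEquiv.symm
  have h1 : {f : Polynomial Fq | f.degree < (n : ℕ)} =
      (Polynomial.degreeLT Fq n : Set (Polynomial Fq)) := by
    ext f
    simp [Polynomial.mem_degreeLT]
  rw [h1]
  exact Set.toFinite _

/-- The residues modulo `h`: all polynomials of degree smaller than `deg h`. -/
noncomputable def residues (Fq : Type) [Field Fq] [Fintype Fq] (h : Polynomial Fq) :
    Finset (Polynomial Fq) :=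
  (finite_degreeLT Fq h.natDegree).toFinset

lemma finite_monicDeg (Fq : Type) [Field Fq] [Fintype Fq] (n : ℕ) :
    {f : Polynomial Fq | f.Monic ∧ f.natDegree = n}.Finite := by
  apply (finite_degreeLT Fq (n + 1)).subset
  rintro f ⟨hm, rfl⟩
  simp only [Set.mem_setOf_eq]
  rw [Polynomial.degree_eq_natDegree hm.ne_zero]
  exact_mod_cast Nat.lt_succ_self _

/-- The monic polynomials of degree `n`, as a finite set. -/
noncomputable def Mdeg (Fq : Type) [Field Fq] [Fintype Fq] (n : ℕ) : Finset (Polynomial Fq) :=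
  (finite_monicDeg Fq n).toFinset

lemma finite_monicDegLE (Fq : Type) [Field Fq] [Fintype Fq] (n : ℕ) :
    {f : Polynomial Fq | f.Monic ∧ f.natDegree ≤ n}.Finite := by
  apply (finite_degreeLT Fq (n + 1)).subset
  rintro f ⟨hm, hle⟩
  simp only [Set.mem_setOf_eq]
  rw [Polynomial.degree_eq_natDegree hm.ne_zero]
  exact_mod_cast Nat.lt_succ_of_le hle

/-- The monic polynomials of degree at most `n`, as a finite set. -/
noncomputable def MdegLE (Fq : Type) [Field Fq] [Fintype Fq] (n : ℕ) : Finset (Polynomial Fq) :=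
  (finite_monicDegLE Fq n).toFinset

/-- The monic polynomials of degree `k` for an integer `k` (empty for `k < 0`). -/
noncomputable def MdegZ (Fq : Type) [Field Fq] [Fintype Fq] (k : ℤ) : Finset (Polynomial Fq) :=
  if 0 ≤ k then Mdeg Fq k.toNat else ∅

/-- The monic polynomials of degree at most `k`, for an integer `k` (empty for `k < 0`). -/
noncomputable def MdegLEZ (Fq : Type) [Field Fq] [Fintype Fq] (k : ℤ) : Finset (Polynomial Fq) :=
  if 0 ≤ k then MdegLE Fq k.toNat else ∅

lemma finite_sqfMonicDeg (Fq : Type) [Field Fq] [Fintype Fq] (n : ℕ) :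
    {f : Polynomial Fq | f.Monic ∧ Squarefree f ∧ f.natDegree = n}.Finite :=
  (finite_monicDeg Fq n).subset (by rintro f ⟨h1, _, h3⟩; exact ⟨h1, h3⟩)

/-- The monic squarefree polynomials of degree `n`, as a finite set. -/
noncomputable def Hdeg (Fq : Type) [Field Fq] [Fintype Fq] (n : ℕ) : Finset (Polynomial Fq) :=
  (finite_sqfMonicDeg Fq n).toFinset

lemma finite_primeDiv (Fq : Type) [Field Fq] [Fintype Fq] (f : Polynomial Fq) (hf : f ≠ 0) :
    {P : Polynomial Fq | P.Monic ∧ Irreducible P ∧ P ∣ f}.Finite := by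
  apply (finite_monicDegLE Fq f.natDegree).subset
  rintro P ⟨h1, _, h3⟩
  exact ⟨h1, Polynomial.natDegree_le_of_dvd h3 hf⟩

/-- The monic irreducible divisors of `f`, as a finite set. -/
noncomputable def primeDiv (Fq : Type) [Field Fq] [Fintype Fq] (f : Polynomial Fq) :
    Finset (Polynomial Fq) :=
  if hf : f = 0 then ∅ else (finite_primeDiv Fq f hf).toFinset

lemma finite_monicDvd (Fq : Type) [Field Fq] [Fintype Fq] (f : Polynomial Fq) (hf : f ≠ 0) :
    {a : Polynomial Fq | a.Monic ∧ a ∣ f}.Finite := by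
  apply (finite_monicDegLE Fq f.natDegree).subset
  rintro a ⟨h1, h2⟩
  exact ⟨h1, Polynomial.natDegree_le_of_dvd h2 hf⟩

/-- The monic divisors of `f`, as a finite set. -/
noncomputable def monicDvd (Fq : Type) [Field Fq] [Fintype Fq] (f : Polynomial Fq) :
    Finset (Polynomial Fq) :=
  if hf : f = 0 then ∅ else (finite_monicDvd Fq f hf).toFinset

/-- The Möbius function of 𝔽_q[T]. -/
noncomputable def muP (Fq : Type) [Field Fq] [Fintype Fq] (f : Polynomial Fq) : ℤ :=
  if Squarefree f then (-1) ^ (primeDiv Fq f).card else 0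

/-- The Euler phi function of 𝔽_q[T]. -/
noncomputable def phiPoly (Fq : Type) [Field Fq] (f : Polynomial Fq) : ℕ :=
  Nat.card ((Polynomial Fq ⧸ Ideal.span {f})ˣ)

/-- The monic gcd of two polynomials. -/
noncomputable def mgcd (Fq : Type) [Field Fq] (a b : Polynomial Fq) : Polynomial Fq :=
  Polynomial.C ((EuclideanDomain.gcd a b).leadingCoeff)⁻¹ * EuclideanDomain.gcd a b

/-- A Dirichlet character of 𝔽_q[T]: a homomorphism `(𝔽_q[T]/(m))^× → ℂ^×` extended to
`𝔽_q[T]` by periodicity on elements coprime to `m` and by `0` on the others. -/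
structure DChar (Fq : Type) [Field Fq] where
  modulus : Polynomial Fq
  monic_modulus : modulus.Monic
  toFun : Polynomial Fq → ℂ
  map_one : toFun 1 = 1
  map_mul : ∀ a b : Polynomial Fq, toFun (a * b) = toFun a * toFun b
  periodic : ∀ a b : Polynomial Fq, modulus ∣ a - b → toFun a = toFun b
  eq_zero_iff : ∀ a : Polynomial Fq, toFun a = 0 ↔ ¬ IsCoprime a modulus

/-- `h` is a (monic) period of the Dirichlet character `χ`. -/
def IsPeriod {Fq : Type} [Field Fq] (χ : DChar Fq) (h : Polynomial Fq) : Prop :=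
  h.Monic ∧ ∀ a b : Polynomial Fq, IsCoprime a χ.modulus → IsCoprime b χ.modulus →
    h ∣ a - b → χ.toFun a = χ.toFun b

/-- A Dirichlet character is primitive when its conductor (the monic period of smallest
degree) is its modulus. -/
def IsPrimitiveChar {Fq : Type} [Field Fq] (χ : DChar Fq) : Prop :=
  ∀ h : Polynomial Fq, IsPeriod χ h → χ.modulus.natDegree ≤ h.natDegree

/-- A Dirichlet character is cubic when `χ³` is principal but `χ` is not. -/
def IsCubicChar {Fq : Type} [Field Fq] (χ : DChar Fq) : Prop :=
  (∀ a : Polynomial Fq, IsCoprime a χ.modulus → χ.toFun a ^ 3 = 1) ∧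
    ¬ ∀ a : Polynomial Fq, IsCoprime a χ.modulus → χ.toFun a = 1

/-- A Dirichlet character is even when it is trivial on the constants 𝔽_q^×. -/
def IsEvenChar {Fq : Type} [Field Fq] (χ : DChar Fq) : Prop :=
  ∀ c : Fq, c ≠ 0 → χ.toFun (Polynomial.C c) = 1

/-- A Dirichlet character is odd when it is not even. -/
def IsOddChar {Fq : Type} [Field Fq] (χ : DChar Fq) : Prop := ¬ IsEvenChar χ

/-- The genus of a Dirichlet character of conductor `h`:  `deg h - 2` if even,
`deg h - 1` if odd. -/
noncomputable def genus {Fq : Type} [Field Fq] (χ : DChar Fq) : ℕ :=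
  if IsEvenChar χ then χ.modulus.natDegree - 2 else χ.modulus.natDegree - 1

/-- The central value `L_q(1/2,χ) = Σ_{f ∈ M_{q, ≤ deg h - 1}} χ(f) q^{-deg f/2}`. -/
noncomputable def Lhalf (Fq : Type) [Field Fq] [Fintype Fq] (χ : DChar Fq) : ℂ :=
  ∑ f ∈ MdegLE Fq (χ.modulus.natDegree - 1),
    χ.toFun f / (Real.sqrt (Fintype.card Fq : ℝ) : ℂ) ^ f.natDegree

/-- The zeta function `ζ_q(s) = (1 - q^{1-s})⁻¹`. -/
noncomputable def zetaQ (Fq : Type) [Fintype Fq] (s : ℝ) : ℝ :=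
  (1 - (Fintype.card Fq : ℝ) ^ ((1 : ℝ) - s))⁻¹

/-- The primitive cube root of unity `e^{2πi/3}` in ℂ. -/
noncomputable def omega3 : ℂ := Complex.exp (2 * Real.pi * Complex.I / 3)

/-- The cubic character `χ₃` of 𝔽_q^×, relative to the choice `ζ = Ω(e^{2πi/3})` of a
primitive cube root of unity of 𝔽_q:  `χ₃(α) = Ω⁻¹(α^{(q-1)/3})`. -/
noncomputable def chi3 (Fq : Type) [Field Fq] [Fintype Fq] (ζ : Fq) (α : Fq) : ℂ :=
  if α ^ ((Fintype.card Fq - 1) / 3) = 1 then 1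
  else if α ^ ((Fintype.card Fq - 1) / 3) = ζ then omega3
  else omega3 ^ 2

/-- The cubic residue symbol `χ_P` for `P` a monic irreducible polynomial, relative to the
choice `ζ = Ω(e^{2πi/3})` of a primitive cube root of unity of 𝔽_q. -/
noncomputable def cubicSymP (Fq : Type) [Field Fq] [Fintype Fq] (ζ : Fq) (P a : Polynomial Fq) :
    ℂ :=
  if P ∣ a then 0
  else if P ∣ (a ^ ((Fintype.card Fq ^ P.natDegree - 1) / 3) - 1) then 1
  else if P ∣ (a ^ ((Fintype.card Fq ^ P.natDegree - 1) / 3) - Polynomial.C ζ) then omega3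
  else omega3 ^ 2

/-- The cubic residue symbol `χ_F = Π χ_{P_i}^{e_i}` for `F = Π P_i^{e_i}` monic. -/
noncomputable def cubicSym (Fq : Type) [Field Fq] [Fintype Fq] (ζ : Fq) (F a : Polynomial Fq) :
    ℂ :=
  ((UniqueFactorizationMonoid.normalizedFactors F).map (fun P => cubicSymP Fq ζ P a)).prod

/-- The standard additive character `x ↦ exp(2πi Tr_{𝔽_q/𝔽_p}(x)/p)` of 𝔽_q. -/
noncomputable def stdChar (Fq : Type) [Field Fq] [Fintype Fq] (p : ℕ) [Algebra (ZMod p) Fq]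
    (x : Fq) : ℂ :=
  Complex.exp (2 * Real.pi * Complex.I * ((Algebra.trace (ZMod p) Fq x).val : ℂ) / p)

/-- `e_q(g/h)`, i.e. the standard additive character evaluated at the coefficient of `T⁻¹`
in the expansion of `g/h` in `𝔽_q((1/T))`; this coefficient equals the coefficient of
`T^{deg h - 1}` in `g mod h`. -/
noncomputable def eqF (Fq : Type) [Field Fq] [Fintype Fq] (p : ℕ) [Algebra (ZMod p) Fq]
    (g h : Polynomial Fq) : ℂ :=
  stdChar Fq p ((g %ₘ h).coeff (h.natDegree - 1))

/-- The generalized cubic Gauss sum `G_q(V,f) = Σ_{u mod f} χ_f(u) e_q(uV/f)`. -/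
noncomputable def Gq (Fq : Type) [Field Fq] [Fintype Fq] (ζ : Fq) (p : ℕ) [Algebra (ZMod p) Fq]
    (V f : Polynomial Fq) : ℂ :=
  ∑ u ∈ residues Fq f, cubicSym Fq ζ f u * eqF Fq p (u * V) f

/-- The Gauss sum `G(χ) = Σ_{a mod h} χ(a) e_q(a/h)` of a Dirichlet character of modulus `h`. -/
noncomputable def bigGauss (Fq : Type) [Field Fq] [Fintype Fq] (p : ℕ) [Algebra (ZMod p) Fq]
    (χ : DChar Fq) : ℂ :=
  ∑ a ∈ residues Fq χ.modulus, χ.toFun a * eqF Fq p a χ.modulus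

/-- `τ(χ) = Σ_{c ∈ 𝔽_q^×} χ(c) exp(2πi Tr(c)/p)`, the Gauss sum of the restriction of a
Dirichlet character to the constants. -/
noncomputable def tauD (Fq : Type) [Field Fq] [Fintype Fq] (p : ℕ) [Algebra (ZMod p) Fq]
    (χ : DChar Fq) : ℂ :=
  ∑ c : Fqˣ, χ.toFun (Polynomial.C (c : Fq)) * stdChar Fq p (c : Fq)

/-- `τ(χ₃) = Σ_{c ∈ 𝔽_q^×} χ₃(c) exp(2πi Tr(c)/p)`. -/
noncomputable def tauChi3 (Fq : Type) [Field Fq] [Fintype Fq] (ζ : Fq) (p : ℕ)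
    [Algebra (ZMod p) Fq] : ℂ :=
  ∑ c : Fqˣ, chi3 Fq ζ (c : Fq) * stdChar Fq p (c : Fq)

/-- The generating series `Ψ_q(f,X) = Σ_{F monic} G_q(f,F) X^{deg F}` as a formal power
series. -/
noncomputable def PsiS (Fq : Type) [Field Fq] [Fintype Fq] (ζ : Fq) (p : ℕ)
    [Algebra (ZMod p) Fq] (f : Polynomial Fq) : PowerSeries ℂ :=
  PowerSeries.mk fun n => ∑ F ∈ Mdeg Fq n, Gq Fq ζ p f F

/-- The generating series `Ψ̃_q(f,X) = Σ_{F monic, (F,f)=1} G_q(f,F) X^{deg F}` as a formal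
power series. -/
noncomputable def PsiTildeS (Fq : Type) [Field Fq] [Fintype Fq] (ζ : Fq) (p : ℕ)
    [Algebra (ZMod p) Fq] (f : Polynomial Fq) : PowerSeries ℂ :=
  PowerSeries.mk fun n => ∑ F ∈ Mdeg Fq n, if IsCoprime F f then Gq Fq ζ p f F else 0


/-!
Write a nonzero residue `a` modulo `h` uniquely as `c * f` with `c ∈ 𝔽_q^×` and `f` monic of
degree `≤ deg h - 1`. Since `e_q(a/h)` only sees the coefficient of `T^{deg h - 1}` of `a`, which
is `c` when `deg f = deg h - 1` and `0` otherwise,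
`G(χ) = τ(χ) A + (Σ_c χ(c)) B`, where `A` (resp. `B`) is the sum of `χ(f)` over monic `f` of
degree `deg h - 1` (resp. of smaller degree). Primitivity makes `χ` nontrivial, so
`0 = Σ_{a mod h} χ(a) = (Σ_c χ(c)) (A + B)`. For odd `χ`, `Σ_c χ(c) = 0`; for even `χ` it is
`q - 1 ≠ 0`, which forces `B = -A`, and `τ(χ) = Σ_c ψ(c) = -1` by orthogonality of the
nontrivial additive character `ψ = stdChar`.
-/

section Residues

variable {Fq : Type} [Field Fq] [Fintype Fq]

lemma mem_residues {h f : Polynomial Fq} :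
    f ∈ residues Fq h ↔ f.degree < (h.natDegree : ℕ) := by
  simp [residues]

lemma mem_Mdeg {n : ℕ} {f : Polynomial Fq} :
    f ∈ Mdeg Fq n ↔ f.Monic ∧ f.natDegree = n := by
  simp [Mdeg]

lemma mem_MdegLE {n : ℕ} {f : Polynomial Fq} :
    f ∈ MdegLE Fq n ↔ f.Monic ∧ f.natDegree ≤ n := by
  simp [MdegLE]

lemma Mdeg_subset_MdegLE (m : ℕ) : Mdeg Fq m ⊆ MdegLE Fq m := fun f hf => by
  obtain ⟨hf, hfm⟩ := mem_Mdeg.mp hf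
  exact mem_MdegLE.mpr ⟨hf, hfm.le⟩

lemma sum_MdegLE_eq_sum_Mdeg_add {M : Type*} [AddCommMonoid M] (m : ℕ) (g : Polynomial Fq → M) :
    ∑ f ∈ MdegLE Fq m, g f =
      ∑ f ∈ Mdeg Fq m, g f + ∑ f ∈ (MdegLE Fq m).filter (·.natDegree ≠ m), g f := by
  rw [← Finset.sum_filter_add_sum_filter_not _ (·.natDegree = m)]
  congr 2
  ext f
  simp only [Finset.mem_filter, mem_MdegLE, mem_Mdeg]
  constructor
  · rintro ⟨⟨hf, -⟩, hfm⟩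
    exact ⟨hf, hfm⟩
  · rintro ⟨hf, hfm⟩
    exact ⟨⟨hf, hfm.le⟩, hfm⟩

lemma coeff_eq_one_of_mem_Mdeg {m : ℕ} {f : Polynomial Fq} (hf : f ∈ Mdeg Fq m) :
    f.coeff m = 1 := by
  obtain ⟨hmon, rfl⟩ := mem_Mdeg.mp hf
  exact hmon.coeff_natDegree

lemma coeff_eq_zero_of_mem_filter_MdegLE {m : ℕ} {f : Polynomial Fq}
    (hf : f ∈ (MdegLE Fq m).filter (·.natDegree ≠ m)) : f.coeff m = 0 := by
  obtain ⟨hfLE, hfm⟩ := Finset.mem_filter.mp hf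
  exact coeff_eq_zero_of_natDegree_lt (lt_of_le_of_ne (mem_MdegLE.mp hfLE).2 hfm)

lemma mem_residues_iff_natDegree_lt {h a : Polynomial Fq} (ha : a ≠ 0) :
    a ∈ residues Fq h ↔ a.natDegree < h.natDegree := by
  rw [mem_residues, natDegree_lt_iff_degree_lt ha]

lemma modByMonic_mem_residues {h : Polynomial Fq} (hh : h.Monic) (a : Polynomial Fq) :
    a %ₘ h ∈ residues Fq h := by
  rw [mem_residues, ← degree_eq_natDegree hh.ne_zero]
  exact degree_modByMonic_lt a hh

lemma modByMonic_eq_self_of_mem_residues {h a : Polynomial Fq} (hh : h.Monic)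
    (ha : a ∈ residues Fq h) : a %ₘ h = a := by
  rw [modByMonic_eq_self_iff hh, degree_eq_natDegree hh.ne_zero]
  exact mem_residues.mp ha

lemma mul_modByMonic_mul_modByMonic {h a b r : Polynomial Fq} (hh : h.Monic)
    (hab : h ∣ a * b - 1) (hr : r ∈ residues Fq h) :
    (a * ((b * r) %ₘ h)) %ₘ h = r := by
  calc (a * ((b * r) %ₘ h)) %ₘ h = r %ₘ h := by
        refine modByMonic_eq_of_dvd_sub hh ?_
        have hsplit : a * ((b * r) %ₘ h) - r = a * ((b * r) %ₘ h - b * r) + (a * b - 1) * r := by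
          ring
        rw [hsplit]
        exact dvd_add ((dvd_modByMonic_sub _ _).mul_left a) (hab.mul_right r)
    _ = r := modByMonic_eq_self_of_mem_residues hh hr

lemma sum_residues_mul_left {M : Type*} [AddCommMonoid M] {h a : Polynomial Fq}
    (hh : h.Monic) (ha : IsCoprime a h) (F : Polynomial Fq → M)
    (hF : ∀ x y, h ∣ x - y → F x = F y) :
    ∑ r ∈ residues Fq h, F (a * r) = ∑ r ∈ residues Fq h, F r := by
  obtain ⟨u, v, huv⟩ := ha
  have hua : h ∣ u * a - 1 := ⟨-v, by linear_combination huv⟩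
  have hau : h ∣ a * u - 1 := ⟨-v, by linear_combination huv⟩
  exact Finset.sum_nbij' (fun r => (a * r) %ₘ h) (fun r => (u * r) %ₘ h)
    (fun r _ => modByMonic_mem_residues hh _) (fun r _ => modByMonic_mem_residues hh _)
    (fun r hr => mul_modByMonic_mul_modByMonic hh hua hr)
    (fun r hr => mul_modByMonic_mul_modByMonic hh hau hr)
    (fun r _ => hF _ _ (dvd_sub_comm.mp (dvd_modByMonic_sub _ _)))

lemma sum_residues_eq_sum_units_sum_MdegLE {M : Type*} [AddCommMonoid M] {h : Polynomial Fq}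
    (hdeg : 1 ≤ h.natDegree) (F : Polynomial Fq → M) (hF : F 0 = 0) :
    ∑ a ∈ residues Fq h, F a =
      ∑ c : Fqˣ, ∑ f ∈ MdegLE Fq (h.natDegree - 1), F (C (c : Fq) * f) := by
  rw [← Finset.sum_erase _ hF, ← Finset.sum_product']
  symm
  refine Finset.sum_bij' (fun x _ => C (x.1 : Fq) * x.2)
    (fun a ha => (Units.mk0 a.leadingCoeff (leadingCoeff_ne_zero.mpr (Finset.ne_of_mem_erase ha)),
      C a.leadingCoeff⁻¹ * a)) ?_ ?_ ?_ ?_ (fun _ _ => rfl)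
  · rintro ⟨c, f⟩ hx
    obtain ⟨hf, hfdeg⟩ := mem_MdegLE.mp (Finset.mem_product.mp hx).2
    have hcf : C (c : Fq) * f ≠ 0 := mul_ne_zero (C_ne_zero.mpr c.ne_zero) hf.ne_zero
    refine Finset.mem_erase.mpr ⟨hcf, (mem_residues_iff_natDegree_lt hcf).mpr ?_⟩
    rw [natDegree_C_mul c.ne_zero]
    have : f.natDegree ≤ h.natDegree - 1 := hfdeg
    omega
  · intro a ha
    obtain ⟨ha0, har⟩ := Finset.mem_erase.mp ha
    have hlc : a.leadingCoeff ≠ 0 := leadingCoeff_ne_zero.mpr ha0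
    refine Finset.mem_product.mpr ⟨Finset.mem_univ _, mem_MdegLE.mpr ⟨?_, ?_⟩⟩
    · exact monic_C_mul_of_mul_leadingCoeff_eq_one (inv_mul_cancel₀ hlc)
    · rw [natDegree_C_mul (inv_ne_zero hlc)]
      have := (mem_residues_iff_natDegree_lt ha0).mp har
      omega
  · rintro ⟨c, f⟩ hx
    have hf : f.Monic := (mem_MdegLE.mp (Finset.mem_product.mp hx).2).1
    have hlc : (C (c : Fq) * f).leadingCoeff = c := by
      rw [leadingCoeff_C_mul_of_isUnit c.isUnit, hf.leadingCoeff, mul_one]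
    ext
    · simp [hlc]
    · simp [hlc, ← mul_assoc, ← C_mul]
  · intro a ha
    have hlc : a.leadingCoeff ≠ 0 := leadingCoeff_ne_zero.mpr (Finset.ne_of_mem_erase ha)
    simp [← mul_assoc, ← C_mul, hlc]

end Residues

lemma eqF_C_mul {Fq : Type} [Field Fq] [Fintype Fq] {p : ℕ} [Algebra (ZMod p) Fq]
    {h f : Polynomial Fq} (hh : h.Monic) (hf : f.natDegree < h.natDegree) (c : Fq) :
    eqF Fq p (C c * f) h = stdChar Fq p (c * f.coeff (h.natDegree - 1)) := by
  have hdeg : (C c * f).degree < h.degree :=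
    degree_lt_degree ((natDegree_C_mul_le c f).trans_lt hf)
  rw [eqF, (modByMonic_eq_self_iff hh).mpr hdeg, coeff_C_mul]

lemma stdChar_zero {Fq : Type} [Field Fq] [Fintype Fq] {p : ℕ} [Algebra (ZMod p) Fq] :
    stdChar Fq p 0 = 1 := by
  simp [stdChar]

lemma sum_units_eq_sum_sub_apply_zero {G₀ M : Type*} [GroupWithZero G₀] [Fintype G₀]
    [Fintype G₀ˣ] [DecidableEq G₀] [AddCommGroup M] (f : G₀ → M) :
    ∑ c : G₀ˣ, f c = ∑ x, f x - f 0 := by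
  rw [Fintype.sum_eq_add_sum_subtype_ne f 0, add_sub_cancel_left]
  exact Fintype.sum_equiv unitsEquivNeZero _ _ (fun _ => rfl)

section StdChar

variable {Fq : Type} [Field Fq] [Fintype Fq] {p : ℕ} [Fact p.Prime] [Algebra (ZMod p) Fq]

variable (Fq p) in
noncomputable def stdAddChar : AddChar Fq ℂ :=
  ZMod.stdAddChar.compAddMonoidHom (Algebra.trace (ZMod p) Fq).toAddMonoidHom

lemma stdAddChar_apply (x : Fq) : stdAddChar Fq p x = stdChar Fq p x := by
  simp [stdAddChar, stdChar, ZMod.stdAddChar_apply, ZMod.toCircle_apply]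

lemma stdAddChar_ne_one : stdAddChar Fq p ≠ 1 := by
  have : Module.Finite (ZMod p) Fq := Module.Finite.of_finite
  obtain ⟨x, hx⟩ := Algebra.trace_surjective (ZMod p) Fq 1
  intro h1
  have hx1 : ZMod.stdAddChar (1 : ZMod p) = ZMod.stdAddChar (0 : ZMod p) := by
    simpa [stdAddChar, hx] using DFunLike.congr_fun h1 x
  exact one_ne_zero (ZMod.injective_stdAddChar hx1)

lemma sum_units_stdChar : ∑ c : Fqˣ, stdChar Fq p c = -1 := by
  simp_rw [← stdAddChar_apply]
  rw [sum_units_eq_sum_sub_apply_zero, AddChar.sum_eq_zero_of_ne_one stdAddChar_ne_one,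
    AddChar.map_zero_eq_one, zero_sub]

end StdChar

namespace DChar

variable {Fq : Type} [Field Fq] (χ : DChar Fq)

lemma toFun_zero (hdeg : 1 ≤ χ.modulus.natDegree) : χ.toFun 0 = 0 := by
  rw [χ.eq_zero_iff, isCoprime_zero_left]
  intro hu
  have := natDegree_eq_zero_of_isUnit hu
  omega

noncomputable def constChar : Fqˣ →* ℂ where
  toFun c := χ.toFun (C (c : Fq))
  map_one' := by simpa using χ.map_one
  map_mul' a b := by simp [χ.map_mul]

lemma constChar_apply (c : Fqˣ) : χ.constChar c = χ.toFun (C (c : Fq)) := rfl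

lemma constChar_eq_one_iff : χ.constChar = 1 ↔ IsEvenChar χ := by
  refine ⟨fun h c hc => ?_, fun h => MonoidHom.ext fun c => h c c.ne_zero⟩
  simpa [constChar_apply] using DFunLike.congr_fun h (Units.mk0 c hc)

lemma exists_toFun_ne_one (hprim : IsPrimitiveChar χ) (hdeg : 1 ≤ χ.modulus.natDegree) :
    ∃ a, IsCoprime a χ.modulus ∧ χ.toFun a ≠ 1 := by
  by_contra! htriv
  have hper : IsPeriod χ 1 :=
    ⟨monic_one, fun a b ha hb _ => by rw [htriv a ha, htriv b hb]⟩
  have := hprim 1 hper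
  rw [natDegree_one] at this
  omega

variable [Fintype Fq]

lemma sum_constChar_of_isOddChar (hχ : IsOddChar χ) : ∑ c, χ.constChar c = 0 :=
  sum_hom_units_eq_zero _ (mt χ.constChar_eq_one_iff.mp hχ)

lemma sum_constChar_of_isEvenChar (hχ : IsEvenChar χ) :
    ∑ c, χ.constChar c = Fintype.card Fq - 1 := by
  rw [χ.constChar_eq_one_iff.mpr hχ]
  simp [Fintype.card_units, Nat.cast_sub Fintype.card_pos]

lemma sum_residues_eq_zero (hprim : IsPrimitiveChar χ) (hdeg : 1 ≤ χ.modulus.natDegree) :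
    ∑ a ∈ residues Fq χ.modulus, χ.toFun a = 0 := by
  obtain ⟨a, ha, hχa⟩ := χ.exists_toFun_ne_one hprim hdeg
  have hshift := sum_residues_mul_left χ.monic_modulus ha χ.toFun χ.periodic
  simp_rw [χ.map_mul, ← Finset.mul_sum] at hshift
  exact (mul_left_eq_self₀.mp hshift).resolve_left hχa

lemma sum_constChar_mul_sum_MdegLE_eq_zero (hprim : IsPrimitiveChar χ)
    (hdeg : 1 ≤ χ.modulus.natDegree) :
    (∑ c, χ.constChar c) * ∑ f ∈ MdegLE Fq (χ.modulus.natDegree - 1), χ.toFun f = 0 := by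
  rw [← χ.sum_residues_eq_zero hprim hdeg,
    sum_residues_eq_sum_units_sum_MdegLE hdeg _ (χ.toFun_zero hdeg), Finset.sum_mul]
  simp_rw [χ.map_mul, ← Finset.mul_sum, constChar_apply]

variable {p : ℕ} [Algebra (ZMod p) Fq]

lemma toFun_mul_eqF_C_mul (c : Fqˣ) {f : Polynomial Fq}
    (hf : f ∈ MdegLE Fq (χ.modulus.natDegree - 1)) (hdeg : 1 ≤ χ.modulus.natDegree) :
    χ.toFun (C (c : Fq) * f) * eqF Fq p (C (c : Fq) * f) χ.modulus =
      χ.constChar c * stdChar Fq p (c * f.coeff (χ.modulus.natDegree - 1)) * χ.toFun f := by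
  have hlt : f.natDegree < χ.modulus.natDegree := by
    have := (mem_MdegLE.mp hf).2
    omega
  rw [χ.map_mul, eqF_C_mul χ.monic_modulus hlt, constChar_apply]
  ring

lemma bigGauss_eq (hdeg : 1 ≤ χ.modulus.natDegree) :
    bigGauss Fq p χ =
      tauD Fq p χ * ∑ f ∈ Mdeg Fq (χ.modulus.natDegree - 1), χ.toFun f +
        (∑ c, χ.constChar c) * ∑ f ∈ (MdegLE Fq (χ.modulus.natDegree - 1)).filter
          (·.natDegree ≠ χ.modulus.natDegree - 1), χ.toFun f := by
  rw [bigGauss, sum_residues_eq_sum_units_sum_MdegLE hdeg _ (by rw [χ.toFun_zero hdeg, zero_mul]),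
    tauD, Finset.sum_mul, Finset.sum_mul, ← Finset.sum_add_distrib]
  refine Finset.sum_congr rfl fun c _ => ?_
  rw [sum_MdegLE_eq_sum_Mdeg_add, Finset.mul_sum, Finset.mul_sum]
  congr 1
  · refine Finset.sum_congr rfl fun f hf => ?_
    rw [χ.toFun_mul_eqF_C_mul c (Mdeg_subset_MdegLE _ hf) hdeg, coeff_eq_one_of_mem_Mdeg hf,
      mul_one, constChar_apply]
  · refine Finset.sum_congr rfl fun f hf => ?_
    rw [χ.toFun_mul_eqF_C_mul c (Finset.mem_filter.mp hf).1 hdeg,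
      coeff_eq_zero_of_mem_filter_MdegLE hf, mul_zero, stdChar_zero, mul_one]

end DChar

theorem statement4_general (Fq : Type) [Field Fq] [Fintype Fq]
    (p : ℕ) [Fact p.Prime] [Algebra (ZMod p) Fq]
    (χ : DChar Fq) (hprim : IsPrimitiveChar χ) (hdeg : 1 ≤ χ.modulus.natDegree) :
    (IsOddChar χ →
      bigGauss Fq p χ = tauD Fq p χ * ∑ f ∈ Mdeg Fq (χ.modulus.natDegree - 1), χ.toFun f) ∧
    (IsEvenChar χ →
      bigGauss Fq p χ =
        -(Fintype.card Fq : ℂ) * ∑ f ∈ Mdeg Fq (χ.modulus.natDegree - 1), χ.toFun f) := by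
  rw [χ.bigGauss_eq hdeg]
  refine ⟨fun hodd => by rw [χ.sum_constChar_of_isOddChar hodd, zero_mul, add_zero],
    fun heven => ?_⟩
  have hτ : tauD Fq p χ = -1 := by
    simp_rw [tauD, heven _ (Units.ne_zero _), one_mul]
    exact sum_units_stdChar
  have hq : (Fintype.card Fq : ℂ) - 1 ≠ 0 := by
    rw [sub_ne_zero, Nat.cast_ne_one]
    exact Fintype.one_lt_card.ne'
  have horth := χ.sum_constChar_mul_sum_MdegLE_eq_zero hprim hdeg
  rw [χ.sum_constChar_of_isEvenChar heven, sum_MdegLE_eq_sum_Mdeg_add] at horth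
  rw [hτ, χ.sum_constChar_of_isEvenChar heven,
    eq_neg_of_add_eq_zero_right ((mul_eq_zero.mp horth).resolve_left hq)]
  ring

/-- The Gauss sum `G(χ)` of a primitive Dirichlet character expressed through `τ(χ)` and
the top coefficient of the `L`-function. -/
theorem statement4 (Fq : Type) [Field Fq] [Fintype Fq]
    (hq : Odd (Fintype.card Fq))
    (p : ℕ) [Fact p.Prime] [Algebra (ZMod p) Fq] (hp : p = ringChar Fq)
    (χ : DChar Fq) (hprim : IsPrimitiveChar χ) (hdeg : 1 ≤ χ.modulus.natDegree) :
    (IsOddChar χ →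
      bigGauss Fq p χ = tauD Fq p χ * ∑ f ∈ Mdeg Fq (χ.modulus.natDegree - 1), χ.toFun f) ∧
    (IsEvenChar χ →
      bigGauss Fq p χ =
        -(Fintype.card Fq : ℂ) * ∑ f ∈ Mdeg Fq (χ.modulus.natDegree - 1), χ.toFun f) :=
  statement4_general Fq p χ hprim hdeg

end CubicLF
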